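/- arXiv:1305.5781 — 3 statements merged into one kernel-verified Lean document; each statement's English description precedes it below -/
import Mathlib

section
/- Let u ≤ 0 be measurable on the unit ball B of ℂⁿ and for s ≥ 0 set u_s = max(u+s, 0). If h is holomorphic on B with ∫_B |h|² e^{-pu} dm < ∞ for some 0 < p < 2, then C_p ∫_B |h|² e^{-pu} dm = ∫₀^∞ e^{ps} (∫_B |h|² e^{-2u_s} dm) ds + (1/p) ∫_B |h|² dm, where C_p = 1/p + 1/(2-p). -/
open MeasureTheory Real

/-- The Euclidean ball of radius `r` centered at the origin in `ℂⁿ`. -/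
def euclideanBall (n : ℕ) (r : ℝ) : Set (Fin n → ℂ) :=
  {z | ∑ i, ‖z i‖ ^ 2 < r ^ 2}

/-!
For `x ≤ 0`, splitting the `s`-integral at `s = -x` gives
`∫₀^∞ e^{ps} e^{-2 max(x + s, 0)} ds = (e^{-px} - 1)/p + e^{-px}/(2 - p) = C_p e^{-px} - 1/p`.
Taking `x = u(z)`, multiplying by `|h(z)|²` and integrating over the ball gives the identity once the
two integrals may be exchanged; Fubini applies because the absolute value of the integrand integrates
to `C_p |h|² e^{-pu} - |h|²/p`, and `|h|² ≤ |h|² e^{-pu}` since `u ≤ 0`.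
-/

open Set

theorem integrableOn_exp_mul_exp_neg_two_max {p : ℝ} (hp : p < 2) (x : ℝ) :
    IntegrableOn (fun s => exp (p * s) * exp (-2 * max (x + s) 0)) (Ioi 0) := by
  refine ((integrableOn_exp_mul_Ioi (a := p - 2) (by linarith) 0).const_mul (exp (-2 * x))).mono'
    (by fun_prop : Continuous _).aestronglyMeasurable (ae_of_all _ fun s => ?_)
  rw [norm_of_nonneg (by positivity), ← exp_add, ← exp_add]
  exact exp_le_exp.2 (by linarith [le_max_left (x + s) 0])

theorem integral_exp_mul_exp_neg_two_max {p x : ℝ} (hp0 : p ≠ 0) (hp2 : p < 2) (hx : x ≤ 0) :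
    ∫ s in Ioi 0, exp (p * s) * exp (-2 * max (x + s) 0)
      = (1 / p + 1 / (2 - p)) * exp (-(p * x)) - 1 / p := by
  have hx' : 0 ≤ -x := by linarith
  have hint := integrableOn_exp_mul_exp_neg_two_max hp2 x
  rw [← Ioc_union_Ioi_eq_Ioi hx', setIntegral_union (Ioc_disjoint_Ioi le_rfl) measurableSet_Ioi
    (hint.mono_set Ioc_subset_Ioi_self) (hint.mono_set (Ioi_subset_Ioi hx'))]
  have below : ∫ s in Ioc 0 (-x), exp (p * s) * exp (-2 * max (x + s) 0)
      = (exp (-(p * x)) - 1) / p := by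
    rw [setIntegral_congr_fun measurableSet_Ioc (g := fun s => exp (p * s)) fun s hs => by
      simp [max_eq_right (show x + s ≤ 0 by linarith [hs.2])],
      ← intervalIntegral.integral_of_le hx', intervalIntegral.integral_comp_mul_left exp hp0,
      integral_exp]
    simp [mul_neg, div_eq_inv_mul]
  have above : ∫ s in Ioi (-x), exp (p * s) * exp (-2 * max (x + s) 0)
      = exp (-(p * x)) / (2 - p) := by
    rw [setIntegral_congr_fun measurableSet_Ioi
      (g := fun s => exp (-2 * x) * exp ((p - 2) * s)) fun s hs => by
        simp only
        rw [max_eq_left (show 0 ≤ x + s by linarith [mem_Ioi.1 hs]), ← exp_add, ← exp_add]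
        ring_nf,
      integral_const_mul, integral_exp_mul_Ioi (by linarith), mul_div_assoc', mul_neg, ← exp_add,
      show -2 * x + (p - 2) * -x = -(p * x) by ring, neg_div, ← div_neg, neg_sub]
  rw [below, above]
  field_simp
  ring

theorem integral_exp_mul_const_mul_exp_neg_two_max {p x : ℝ} (c : ℝ) (hp0 : p ≠ 0) (hp2 : p < 2)
    (hx : x ≤ 0) :
    ∫ s in Ioi 0, exp (p * s) * (c * exp (-2 * max (x + s) 0))
      = c * ((1 / p + 1 / (2 - p)) * exp (-(p * x)) - 1 / p) := by
  simp_rw [mul_left_comm _ c]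
  rw [integral_const_mul, integral_exp_mul_exp_neg_two_max hp0 hp2 hx]

section

variable {X : Type*} [MeasurableSpace X] {μ : Measure X} {g u : X → ℝ} {p : ℝ}

theorem integrable_of_integrable_mul_exp_neg_mul (hu : AEMeasurable u μ)
    (hu0 : ∀ᵐ x ∂μ, u x ≤ 0) (hp : 0 ≤ p) (hint : Integrable (fun x => g x * exp (-(p * u x))) μ) :
    Integrable g μ := by
  refine hint.mono ?_ ?_
  · refine (hint.1.mul (hu.const_mul p).exp.aestronglyMeasurable).congr (ae_of_all _ fun x => ?_)
    simp [mul_assoc, ← exp_add]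
  · filter_upwards [hu0] with x hx
    rw [norm_mul, norm_of_nonneg (exp_nonneg _)]
    exact le_mul_of_one_le_right (norm_nonneg _) (one_le_exp (by nlinarith))

theorem integrable_prod_exp_mul_mul_exp_neg_two_max [SFinite μ] (hu : AEMeasurable u μ)
    (hu0 : ∀ᵐ x ∂μ, u x ≤ 0) (hp0 : 0 < p) (hp2 : p < 2)
    (hint : Integrable (fun x => g x * exp (-(p * u x))) μ) :
    Integrable (Function.uncurry fun s x => exp (p * s) * (g x * exp (-2 * max (u x + s) 0)))
      ((volume.restrict (Ioi 0)).prod μ) := by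
  have hg := integrable_of_integrable_mul_exp_neg_mul hu hu0 hp0.le hint
  have hmeas : AEStronglyMeasurable (Function.uncurry fun s x =>
      exp (p * s) * (g x * exp (-2 * max (u x + s) 0))) ((volume.restrict (Ioi 0)).prod μ) :=
    (measurable_fst.const_mul p).exp.aestronglyMeasurable.mul (hg.1.comp_snd.mul
      ((((hu.comp_snd.add measurable_fst.aemeasurable).max aemeasurable_const).const_mul
        (-2)).exp.aestronglyMeasurable))
  refine (integrable_prod_iff' hmeas).2 ⟨ae_of_all _ fun x => ?_, ?_⟩
  · simp_rw [Function.uncurry_apply_pair, mul_left_comm _ (g x)]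
    exact (integrableOn_exp_mul_exp_neg_two_max hp2 (u x)).const_mul (g x)
  · refine ((hint.norm.const_mul (1 / p + 1 / (2 - p))).sub
      (hg.norm.const_mul (1 / p))).congr ?_
    filter_upwards [hu0] with x hx
    simp_rw [Function.uncurry_apply_pair, norm_mul, norm_of_nonneg (exp_nonneg _)]
    rw [integral_exp_mul_const_mul_exp_neg_two_max _ hp0.ne' hp2 hx, Pi.sub_apply]
    ring

theorem integral_mul_exp_neg_mul_eq [SFinite μ] (hu : AEMeasurable u μ) (hu0 : ∀ᵐ x ∂μ, u x ≤ 0)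
    (hp0 : 0 < p) (hp2 : p < 2) (hint : Integrable (fun x => g x * exp (-(p * u x))) μ) :
    (1 / p + 1 / (2 - p)) * ∫ x, g x * exp (-(p * u x)) ∂μ
      = (∫ s in Ioi 0, exp (p * s) * ∫ x, g x * exp (-2 * max (u x + s) 0) ∂μ)
        + 1 / p * ∫ x, g x ∂μ := by
  set C := 1 / p + 1 / (2 - p)
  have hg := integrable_of_integrable_mul_exp_neg_mul hu hu0 hp0.le hint
  have hF := integrable_prod_exp_mul_mul_exp_neg_two_max hu hu0 hp0 hp2 hint
  calc C * ∫ x, g x * exp (-(p * u x)) ∂μ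
      = (∫ x, (C * (g x * exp (-(p * u x))) - 1 / p * g x) ∂μ) + 1 / p * ∫ x, g x ∂μ := by
        rw [integral_sub (hint.const_mul C) (hg.const_mul _), integral_const_mul,
          integral_const_mul]
        ring
    _ = (∫ x, (∫ s in Ioi 0, exp (p * s) * (g x * exp (-2 * max (u x + s) 0))) ∂μ)
          + 1 / p * ∫ x, g x ∂μ := by
        congr 1
        refine integral_congr_ae (hu0.mono fun x hx => ?_)
        dsimp only
        rw [integral_exp_mul_const_mul_exp_neg_two_max _ hp0.ne' hp2 hx]
        ring
    _ = _ := by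
        rw [← integral_integral_swap hF]
        simp_rw [integral_const_mul]

end

theorem measurableSet_euclideanBall (n : ℕ) (r : ℝ) : MeasurableSet (euclideanBall n r) :=
  (isOpen_lt (by fun_prop) continuous_const).measurableSet

theorem stmt1_general {n : ℕ} (u : (Fin n → ℂ) → ℝ)
    (hu_meas : Measurable u)
    (hu_nonpos : ∀ z ∈ euclideanBall n 1, u z ≤ 0)
    (h : (Fin n → ℂ) → ℂ)
    (p : ℝ) (hp0 : 0 < p) (hp2 : p < 2)
    (hint : IntegrableOn (fun z => ‖h z‖ ^ 2 * Real.exp (-(p * u z))) (euclideanBall n 1)) :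
    (1 / p + 1 / (2 - p)) *
        ∫ z in euclideanBall n 1, ‖h z‖ ^ 2 * Real.exp (-(p * u z))
      = (∫ s in Set.Ioi (0:ℝ), Real.exp (p * s) *
            ∫ z in euclideanBall n 1, ‖h z‖ ^ 2 * Real.exp (-2 * max (u z + s) 0))
        + (1 / p) * ∫ z in euclideanBall n 1, ‖h z‖ ^ 2 :=
  integral_mul_exp_neg_mul_eq hu_meas.aemeasurable
    (ae_restrict_of_forall_mem (measurableSet_euclideanBall n 1) hu_nonpos) hp0 hp2 hint

theorem stmt1 {n : ℕ} (u : (Fin n → ℂ) → ℝ)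
    (hu_meas : Measurable u)
    (hu_nonpos : ∀ z ∈ euclideanBall n 1, u z ≤ 0)
    (h : (Fin n → ℂ) → ℂ)
    (hh : DifferentiableOn ℂ h (euclideanBall n 1))
    (p : ℝ) (hp0 : 0 < p) (hp2 : p < 2)
    (hint : IntegrableOn (fun z => ‖h z‖ ^ 2 * Real.exp (-(p * u z))) (euclideanBall n 1)) :
    (1 / p + 1 / (2 - p)) *
        ∫ z in euclideanBall n 1, ‖h z‖ ^ 2 * Real.exp (-(p * u z))
      = (∫ s in Set.Ioi (0:ℝ), Real.exp (p * s) *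
            ∫ z in euclideanBall n 1, ‖h z‖ ^ 2 * Real.exp (-2 * max (u z + s) 0))
        + (1 / p) * ∫ z in euclideanBall n 1, ‖h z‖ ^ 2 :=
  stmt1_general u hu_meas hu_nonpos h p hp0 hp2 hint
end

section
/- Let H₀ be a Hilbert space, T a bounded positive self-adjoint operator on H₀ with 0 < c ≤ T ≤ C, realized as multiplication by e^{-λ(x)} on L²(X, μ) via the spectral theorem. For ε > 0, s > 1/ε and h ∈ L²(μ), let h_s = h·1_{λ > 1+ε}. Then ‖h - h_s‖₀² ≤ 2ε ∫₀^s e^t ∫_X |h|² e^{-tλ} dμ dt and ∫_X |h_s|² e^{-sλ} dμ ≤ e^{-(1+ε)s} ‖h‖₀². -/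
/-!
On `{λ ≤ 1 + ε}` one has `e^t e^{-tλ} ≥ e^{-εt}`, so for `0 ≤ t` the weighted norm satisfies
`e^t |h|_t² ≥ e^{-εt} ‖w‖₀²`; integrating over `[0, s]` gives at least
`(1 - e^{-εs}) / ε · ‖w‖₀² ≥ ‖w‖₀² / (2ε)`, because `εs > 1` and `e^{-1} < 1/2`.
On `{λ > 1 + ε}` the weight `e^{-sλ}` is at most `e^{-(1+ε)s}`.
Since `λ` is bounded below, `t ↦ e^t |h|_t²` is continuous on `[0, s]`, so the `t`-integral
is not the junk value `0` of a non-integrable function.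
-/

open MeasureTheory Real

lemma exp_neg_mul_le_exp_neg_mul {t l m : ℝ} (ht : 0 ≤ t) (hl : m ≤ l) :
    exp (-(t * l)) ≤ exp (-(t * m)) :=
  exp_le_exp.2 (neg_le_neg (mul_le_mul_of_nonneg_left hl ht))

lemma integral_exp_neg_mul {ε : ℝ} (hε : ε ≠ 0) (s : ℝ) :
    ∫ t in (0 : ℝ)..s, exp (-(ε * t)) = (1 - exp (-(ε * s))) / ε := by
  simp_rw [← neg_mul]
  rw [intervalIntegral.integral_comp_mul_left (fun u => exp u) (neg_ne_zero.2 hε),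
    integral_exp]
  simp only [smul_eq_mul, mul_zero, exp_zero, neg_mul]
  field_simp
  ring

lemma one_le_two_mul_integral_exp_neg_mul {ε s : ℝ} (hε : 0 < ε) (hs : 1 < ε * s) :
    1 ≤ 2 * ε * ∫ t in (0 : ℝ)..s, exp (-(ε * t)) := by
  have : exp (-(ε * s)) < 1 / 2 :=
    (exp_lt_exp.2 (neg_lt_neg hs)).trans exp_neg_one_lt_half
  rw [integral_exp_neg_mul hε.ne', mul_div_assoc', mul_div_right_comm,
    mul_div_cancel_right₀ _ hε.ne']
  linarith

section WeightedIntegral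

variable {X : Type*} [MeasurableSpace X] {μ : Measure X} {f lam : X → ℝ} {m : ℝ}

lemma integrable_mul_exp_neg_mul (hf : Integrable f μ) (hlam : Measurable lam)
    (hm : ∀ x, m ≤ lam x) {t : ℝ} (ht : 0 ≤ t) :
    Integrable (fun x => f x * exp (-(t * lam x))) μ :=
  hf.mul_bdd (hlam.const_mul t).neg.exp.aestronglyMeasurable <| .of_forall fun x => by
    rw [norm_of_nonneg (exp_pos _).le]
    exact exp_neg_mul_le_exp_neg_mul ht (hm x)

lemma continuousOn_integral_mul_exp_neg_mul (hf : Integrable f μ) (hlam : Measurable lam)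
    (hm : ∀ x, m ≤ lam x) (s : ℝ) :
    ContinuousOn (fun t => ∫ x, f x * exp (-(t * lam x)) ∂μ) (Set.Icc 0 s) := by
  refine continuousOn_of_dominated (bound := fun x => ‖f x‖ * exp (s * |m|))
    (fun t ht => (integrable_mul_exp_neg_mul hf hlam hm ht.1).aestronglyMeasurable)
    (fun t ht => .of_forall fun x => ?_) (hf.norm.mul_const _)
    (.of_forall fun x => by fun_prop)
  rw [norm_mul, norm_of_nonneg (exp_pos _).le]
  refine mul_le_mul_of_nonneg_left ?_ (norm_nonneg _)
  calc exp (-(t * lam x)) ≤ exp (-(t * m)) := exp_neg_mul_le_exp_neg_mul ht.1 (hm x)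
    _ ≤ exp (s * |m|) := exp_le_exp.2 <| by
      nlinarith [neg_abs_le m, abs_nonneg m, ht.1, ht.2]

lemma exp_neg_mul_mul_setIntegral_le (hf : Integrable f μ) (hf0 : 0 ≤ f)
    (hlam : Measurable lam) (hm : ∀ x, m ≤ lam x) {t : ℝ} (ht : 0 ≤ t) (a : ℝ) :
    exp (-(t * a)) * ∫ x in {x | lam x ≤ a}, f x ∂μ ≤ ∫ x, f x * exp (-(t * lam x)) ∂μ := by
  have hint := integrable_mul_exp_neg_mul hf hlam hm ht
  rw [← integral_const_mul]
  calc ∫ x in {x | lam x ≤ a}, exp (-(t * a)) * f x ∂μ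
      ≤ ∫ x in {x | lam x ≤ a}, f x * exp (-(t * lam x)) ∂μ :=
        setIntegral_mono_on (hf.const_mul _).integrableOn hint.integrableOn
          (measurableSet_le hlam measurable_const) fun x hx => by
            rw [mul_comm]
            exact mul_le_mul_of_nonneg_left (exp_neg_mul_le_exp_neg_mul ht hx) (hf0 x)
    _ ≤ ∫ x, f x * exp (-(t * lam x)) ∂μ :=
        setIntegral_le_integral hint (.of_forall fun x => mul_nonneg (hf0 x) (exp_pos _).le)

lemma setIntegral_le_two_mul_integral_exp_mul_integral (hf : Integrable f μ) (hf0 : 0 ≤ f)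
    (hlam : Measurable lam) (hm : ∀ x, m ≤ lam x) {ε s : ℝ} (hε : 0 < ε) (hs : 1 < ε * s) :
    ∫ x in {x | lam x ≤ 1 + ε}, f x ∂μ
      ≤ 2 * ε * ∫ t in (0 : ℝ)..s, exp t * ∫ x, f x * exp (-(t * lam x)) ∂μ := by
  set W := ∫ x in {x | lam x ≤ 1 + ε}, f x ∂μ
  have hs0 : 0 ≤ s := by nlinarith
  have hW : 0 ≤ W := setIntegral_nonneg (measurableSet_le hlam measurable_const) fun x _ => hf0 x
  have hpointwise : ∀ t ∈ Set.Icc 0 s,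
      exp (-(ε * t)) * W ≤ exp t * ∫ x, f x * exp (-(t * lam x)) ∂μ := fun t ht => by
    have hexp : exp (-(ε * t)) = exp t * exp (-(t * (1 + ε))) := by rw [← exp_add]; ring_nf
    rw [hexp, mul_assoc]
    exact mul_le_mul_of_nonneg_left
      (exp_neg_mul_mul_setIntegral_le hf hf0 hlam hm ht.1 _) (exp_pos t).le
  have hint : IntervalIntegrable (fun t => exp t * ∫ x, f x * exp (-(t * lam x)) ∂μ) volume 0 s :=
    (continuous_exp.continuousOn.mul
      (continuousOn_integral_mul_exp_neg_mul hf hlam hm s)).intervalIntegrable_of_Icc hs0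
  calc W ≤ (2 * ε * ∫ t in (0 : ℝ)..s, exp (-(ε * t))) * W :=
        le_mul_of_one_le_left hW (one_le_two_mul_integral_exp_neg_mul hε hs)
    _ = 2 * ε * ∫ t in (0 : ℝ)..s, exp (-(ε * t)) * W := by
        rw [intervalIntegral.integral_mul_const, mul_assoc]
    _ ≤ _ := by
        gcongr
        exact intervalIntegral.integral_mono_on hs0
          ((by fun_prop : Continuous fun t => exp (-(ε * t)) * W).intervalIntegrable _ _)
          hint hpointwise

lemma setIntegral_mul_exp_neg_mul_le (hf : Integrable f μ) (hf0 : 0 ≤ f)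
    (hlam : Measurable lam) {s : ℝ} (hs : 0 ≤ s) (a : ℝ) :
    ∫ x in {x | a < lam x}, f x * exp (-(s * lam x)) ∂μ ≤ exp (-(a * s)) * ∫ x, f x ∂μ := by
  rw [← integral_const_mul]
  calc ∫ x in {x | a < lam x}, f x * exp (-(s * lam x)) ∂μ
      ≤ ∫ x in {x | a < lam x}, exp (-(a * s)) * f x ∂μ :=
        integral_mono_of_nonneg (.of_forall fun x => mul_nonneg (hf0 x) (exp_pos _).le)
          (hf.const_mul _).integrableOn <|
          (ae_restrict_mem (measurableSet_lt measurable_const hlam)).mono fun x hx => by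
            dsimp only
            rw [mul_comm a s, mul_comm _ (f x)]
            exact mul_le_mul_of_nonneg_left (exp_neg_mul_le_exp_neg_mul hs hx.le) (hf0 x)
    _ ≤ ∫ x, exp (-(a * s)) * f x ∂μ :=
        setIntegral_le_integral (hf.const_mul _)
          (.of_forall fun x => mul_nonneg (exp_pos _).le (hf0 x))

end WeightedIntegral

theorem stmt15_general {X : Type*} [MeasurableSpace X] (μ : Measure X)
    (lam : X → ℝ) (hlam_meas : Measurable lam)
    (c C : ℝ)
    (hT_bdd : ∀ x, c ≤ Real.exp (-lam x) ∧ Real.exp (-lam x) ≤ C)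
    (h : X → ℂ) (hh : MemLp h 2 μ)
    (ε s : ℝ) (hε : 0 < ε) (hs : 1 / ε < s) :
    (∫ x, ‖h x - Set.indicator {x | 1 + ε < lam x} h x‖ ^ 2 ∂μ
        ≤ 2 * ε * ∫ t in (0:ℝ)..s, Real.exp t *
            ∫ x, ‖h x‖ ^ 2 * Real.exp (-(t * lam x)) ∂μ) ∧
      (∫ x, ‖Set.indicator {x | 1 + ε < lam x} h x‖ ^ 2 * Real.exp (-(s * lam x)) ∂μ
        ≤ Real.exp (-((1 + ε) * s)) * ∫ x, ‖h x‖ ^ 2 ∂μ) := by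
  set S := {x | 1 + ε < lam x}
  have hS : MeasurableSet S := measurableSet_lt measurable_const hlam_meas
  have hεs : 1 < ε * s := by rwa [div_lt_iff₀' hε] at hs
  have hm : ∀ x, -log C ≤ lam x := fun x => by
    have := (le_log_iff_exp_le ((exp_pos _).trans_le (hT_bdd x).2)).2 (hT_bdd x).2
    linarith
  have hf : Integrable (fun x => ‖h x‖ ^ 2) μ := hh.norm.integrable_sq
  have hf0 : 0 ≤ fun x => ‖h x‖ ^ 2 := fun x => by positivity
  have hnorm_sq (T : Set X) (x : X) :
      ‖T.indicator h x‖ ^ 2 = T.indicator (fun x => ‖h x‖ ^ 2) x :=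
    congrFun (Set.indicator_comp_of_zero (g := fun z : ℂ => ‖z‖ ^ 2) (by simp)).symm x
  constructor
  · have hcompl : Sᶜ = {x | lam x ≤ 1 + ε} := by ext; simp [S]
    have hdiff (x : X) : h x - S.indicator h x = Sᶜ.indicator h x := by
      rw [Set.indicator_compl, Pi.sub_apply]
    simp_rw [hdiff, hnorm_sq]
    rw [integral_indicator hS.compl, hcompl]
    exact setIntegral_le_two_mul_integral_exp_mul_integral hf hf0 hlam_meas hm hε hεs
  · have hweighted (x : X) : ‖S.indicator h x‖ ^ 2 * exp (-(s * lam x)) =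
        S.indicator (fun x => ‖h x‖ ^ 2 * exp (-(s * lam x))) x := by
      rw [hnorm_sq, Set.indicator_mul_left]
    simp_rw [hweighted]
    rw [integral_indicator hS]
    exact setIntegral_mul_exp_neg_mul_le hf hf0 hlam_meas (by nlinarith) _

theorem stmt15 {X : Type*} [MeasurableSpace X] (μ : Measure X)
    (lam : X → ℝ) (hlam_meas : Measurable lam)
    (c C : ℝ) (hc : 0 < c)
    (hT_bdd : ∀ x, c ≤ Real.exp (-lam x) ∧ Real.exp (-lam x) ≤ C)
    (h : X → ℂ) (hh : MemLp h 2 μ)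
    (ε s : ℝ) (hε : 0 < ε) (hs : 1 / ε < s) :
    (∫ x, ‖h x - Set.indicator {x | 1 + ε < lam x} h x‖ ^ 2 ∂μ
        ≤ 2 * ε * ∫ t in (0:ℝ)..s, Real.exp t *
            ∫ x, ‖h x‖ ^ 2 * Real.exp (-(t * lam x)) ∂μ) ∧
      (∫ x, ‖Set.indicator {x | 1 + ε < lam x} h x‖ ^ 2 * Real.exp (-(s * lam x)) ∂μ
        ≤ Real.exp (-((1 + ε) * s)) * ∫ x, ‖h x‖ ^ 2 ∂μ) :=
  stmt15_general μ lam hlam_meas c C hT_bdd h hh ε s hε hs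
end

section
/- Suppose for each j ∈ ℕ, k_j: [0,∞) → [0,∞) is convex with k_j(s) = 0 for s ≤ j and k_j(s) = 2(s - j) for s ≥ j. Define norms on ℓ² by ‖Σ c_j e_j‖_s² = Σ |c_j|² e^{-k_j(s)}. Then for every j, ∫₀^∞ e^s ‖e_j‖_s² ds < ∞, but there is no pair (ε, s₀) with ε > 0 such that ‖h‖_s² ≤ e^{-(1+ε)s}‖h‖₀² for all s > s₀ and all h ∈ ℓ². -/
open MeasureTheory Real

theorem stmt17 (k : ℕ → ℝ → ℝ)
    (hconv : ∀ j, ConvexOn ℝ (Set.Ici 0) (k j))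
    (hzero : ∀ j : ℕ, ∀ s : ℝ, 0 ≤ s → s ≤ (j:ℝ) → k j s = 0)
    (hlin : ∀ j : ℕ, ∀ s : ℝ, (j:ℝ) ≤ s → k j s = 2 * (s - (j:ℝ))) :
    (∀ j : ℕ, IntegrableOn
        (fun s => Real.exp s *
          ∑' i : ℕ, ‖(fun i' => if i' = j then (1:ℂ) else 0) i‖ ^ 2 * Real.exp (-(k i s)))
        (Set.Ioi (0:ℝ))) ∧
      ¬ ∃ ε > (0:ℝ), ∃ s₀ : ℝ, ∀ s > s₀, ∀ c : ℕ → ℂ, Memℓp c 2 →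
          (∑' i : ℕ, ‖c i‖ ^ 2 * Real.exp (-(k i s)))
            ≤ Real.exp (-((1 + ε) * s)) * ∑' i : ℕ, ‖c i‖ ^ 2 := by
  have hts : ∀ (j : ℕ) (s : ℝ),
      (∑' i : ℕ, ‖(fun i' => if i' = j then (1:ℂ) else 0) i‖ ^ 2 * Real.exp (-(k i s)))
        = Real.exp (-(k j s)) := by
    intro j s
    rw [tsum_eq_single j]
    · simp
    · intro i hi; simp [hi]
  constructor
  · intro j
    simp only [hts]
    have h1 : IntegrableOn (fun s => Real.exp s * Real.exp (-(k j s))) (Set.Ioc 0 (j:ℝ)) := by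
      have hexp : IntegrableOn Real.exp (Set.Ioc (0:ℝ) (j:ℝ)) :=
        (intervalIntegral.intervalIntegrable_exp (μ := volume) (a := 0) (b := (j:ℝ))).1
      apply hexp.congr_fun ?_ measurableSet_Ioc
      intro s hs
      show Real.exp s = Real.exp s * Real.exp (-(k j s))
      rw [hzero j s hs.1.le hs.2]
      simp
    have h2 : IntegrableOn (fun s => Real.exp s * Real.exp (-(k j s))) (Set.Ioi (j:ℝ)) := by
      have hbase := (exp_neg_integrableOn_Ioi (j:ℝ) (b := 1) one_pos).const_mul
        (Real.exp (2 * (j:ℝ)))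
      apply IntegrableOn.congr_fun hbase ?_ measurableSet_Ioi
      intro s hs
      show Real.exp (2 * (j:ℝ)) * Real.exp (-1 * s) = Real.exp s * Real.exp (-(k j s))
      rw [hlin j s (le_of_lt hs), ← Real.exp_add, ← Real.exp_add]
      congr 1
      ring
    exact (h1.union h2).mono_set (fun x hx => by
      rcases le_or_gt x (j:ℝ) with h | h
      · exact Or.inl ⟨hx, h⟩
      · exact Or.inr h)
  · rintro ⟨ε, hε, s₀, H⟩
    set s : ℝ := max s₀ 0 + 1 with hs_def
    have hs₀ : s > s₀ := lt_of_le_of_lt (le_max_left _ _) (by linarith)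
    have hs0 : (0:ℝ) < s := lt_of_le_of_lt (le_max_right _ _) (by linarith)
    set j : ℕ := ⌈s⌉₊ with hj_def
    have hsj : s ≤ (j:ℝ) := Nat.le_ceil s
    set c : ℕ → ℂ := fun i' => if i' = j then (1:ℂ) else 0 with hc_def
    have hmem : Memℓp c 2 := by
      apply memℓp_gen
      apply summable_of_ne_finset_zero (s := ({j} : Finset ℕ))
      intro i hi
      simp only [Finset.mem_singleton] at hi
      simp [hc_def, hi]
    have key := H s hs₀ c hmem
    rw [hts j s] at key
    have h1 : (∑' i : ℕ, ‖c i‖ ^ 2) = 1 := by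
      rw [tsum_eq_single j]
      · simp [hc_def]
      · intro i hi; simp [hc_def, hi]
    rw [h1, mul_one, hzero j s hs0.le hsj, neg_zero, Real.exp_zero] at key
    have hlt : Real.exp (-((1 + ε) * s)) < 1 := by
      rw [Real.exp_lt_one_iff]
      nlinarith
    linarith
end
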